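/- Let φ(x) = 2((1+x)log(1+x) − x)/x² for x > 0. Then lim_{x↓0} φ(x) = 1 and φ(x) ≥ 1/(1 + x/3) for all x > 0. -/

import Mathlib

/-!
With `h(x) = (1+x) log(1+x) − x` we have `φ(x) = 2 h(x) / x²`, and both claims follow from
`3x² / (2(3+x)) ≤ h(x) ≤ x² / 2` for `x ≥ 0`. Each bound holds because the difference vanishes
at `0` and has nonnegative derivative; for the lower bound this is seen by differentiating once
more, where it reduces to `(3+x)³ ≥ 27(1+x)`. The upper bound gives `φ ≤ 1`, so `φ → 1` at `0⁺`
by squeezing `φ` between `1 / (1 + x/3)` and `1`.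
-/

open Filter

theorem monotoneOn_Ici_of_hasDerivAt_nonneg {f f' : ℝ → ℝ} {a : ℝ}
    (hf : ∀ x, a ≤ x → HasDerivAt f (f' x) x) (hf' : ∀ x, a < x → 0 ≤ f' x) :
    MonotoneOn f (Set.Ici a) :=
  monotoneOn_of_hasDerivWithinAt_nonneg (convex_Ici a)
    (fun x hx ↦ (hf x hx).continuousAt.continuousWithinAt)
    (fun x hx ↦ (hf x (interior_subset hx)).hasDerivWithinAt)
    (fun x hx ↦ hf' x (by rwa [interior_Ici] at hx))

noncomputable def bennettH (x : ℝ) : ℝ := (1 + x) * Real.log (1 + x) - x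

theorem hasDerivAt_log_one_add {x : ℝ} (hx : -1 < x) :
    HasDerivAt (fun y ↦ Real.log (1 + y)) (1 + x)⁻¹ x := by
  simpa using ((hasDerivAt_id' x).const_add 1).log (by linarith)

theorem hasDerivAt_bennettH {x : ℝ} (hx : -1 < x) :
    HasDerivAt bennettH (Real.log (1 + x)) x := by
  have hprod := ((hasDerivAt_id' x).const_add 1).mul (hasDerivAt_log_one_add hx)
  refine (hprod.sub (hasDerivAt_id' x)).congr_deriv ?_
  field_simp [show 1 + x ≠ 0 by linarith]
  ring

theorem bennettH_le (x : ℝ) (hx : 0 ≤ x) : bennettH x ≤ x ^ 2 / 2 := by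
  have hmono : MonotoneOn (fun y ↦ y ^ 2 / 2 - bennettH y) (Set.Ici 0) := by
    refine monotoneOn_Ici_of_hasDerivAt_nonneg (f' := fun y ↦ y - Real.log (1 + y))
      (fun y hy ↦ ?_) (fun y hy ↦ ?_)
    · refine (((hasDerivAt_pow 2 y).div_const 2).sub
        (hasDerivAt_bennettH (by linarith))).congr_deriv ?_
      ring
    · linarith [Real.log_le_sub_one_of_pos (show 0 < 1 + y by linarith)]
  simpa [bennettH] using hmono Set.self_mem_Ici hx hx

-- The left side is the derivative of `3x² / (2(3+x))`.
theorem mul_six_add_div_sq_le_log_one_add (x : ℝ) (hx : 0 ≤ x) :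
    3 * x * (6 + x) / (2 * (3 + x) ^ 2) ≤ Real.log (1 + x) := by
  have hmono : MonotoneOn (fun y ↦ Real.log (1 + y) - 3 * y * (6 + y) / (2 * (3 + y) ^ 2))
      (Set.Ici 0) := by
    refine monotoneOn_Ici_of_hasDerivAt_nonneg (f' := fun y ↦ (1 + y)⁻¹ - 27 / (3 + y) ^ 3)
      (fun y hy ↦ ?_) (fun y hy ↦ ?_)
    · have hnum : HasDerivAt (fun y : ℝ ↦ 3 * y * (6 + y)) (18 + 6 * y) y := by
        refine (((hasDerivAt_id' y).const_mul 3).mul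
          ((hasDerivAt_id' y).const_add 6)).congr_deriv ?_
        ring
      have hden : HasDerivAt (fun y : ℝ ↦ 2 * (3 + y) ^ 2) (4 * (3 + y)) y := by
        refine ((((hasDerivAt_id' y).const_add 3).pow 2).const_mul 2).congr_deriv ?_
        ring
      refine ((hasDerivAt_log_one_add (by linarith)).sub
        (hnum.div hden (by positivity))).congr_deriv ?_
      field_simp [show 1 + y ≠ 0 by linarith]
      ring
    · rw [sub_nonneg, inv_eq_one_div, div_le_div_iff₀ (by positivity) (by linarith)]
      nlinarith [sq_nonneg y]
  simpa using hmono Set.self_mem_Ici hx hx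

theorem le_bennettH (x : ℝ) (hx : 0 ≤ x) : 3 * x ^ 2 / (2 * (3 + x)) ≤ bennettH x := by
  have hmono : MonotoneOn (fun y ↦ bennettH y - 3 * y ^ 2 / (2 * (3 + y))) (Set.Ici 0) := by
    refine monotoneOn_Ici_of_hasDerivAt_nonneg
      (f' := fun y ↦ Real.log (1 + y) - 3 * y * (6 + y) / (2 * (3 + y) ^ 2))
      (fun y hy ↦ ?_) (fun y hy ↦ sub_nonneg.2 (mul_six_add_div_sq_le_log_one_add y hy.le))
    have hquot := ((hasDerivAt_pow 2 y).const_mul 3).div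
      (((hasDerivAt_id' y).const_add 3).const_mul 2) (by positivity : (2 : ℝ) * (3 + y) ≠ 0)
    refine ((hasDerivAt_bennettH (by linarith)).sub hquot).congr_deriv ?_
    field_simp
    ring
  simpa [bennettH] using hmono Set.self_mem_Ici hx hx

/-- The Bennett function `φ(x) = 2((1+x)log(1+x) − x)/x²` satisfies
`lim_{x↓0} φ(x) = 1` and `φ(x) ≥ 1/(1+x/3)` for all `x > 0`. -/
theorem bennett_phi_properties (φ : ℝ → ℝ)
    (hφ : ∀ x : ℝ, 0 < x → φ x = 2 * ((1 + x) * Real.log (1 + x) - x) / x^2) :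
    Tendsto φ (nhdsWithin 0 (Set.Ioi 0)) (nhds 1) ∧
    ∀ x : ℝ, 0 < x → 1 / (1 + x / 3) ≤ φ x := by
  have hφH : ∀ x, 0 < x → φ x = 2 * bennettH x / x ^ 2 := hφ
  have lower : ∀ x, 0 < x → 1 / (1 + x / 3) ≤ φ x := by
    intro x hx
    rw [hφH x hx, le_div_iff₀ (by positivity)]
    calc 1 / (1 + x / 3) * x ^ 2 = 2 * (3 * x ^ 2 / (2 * (3 + x))) := by field_simp
      _ ≤ 2 * bennettH x := by gcongr; exact le_bennettH x hx.le
  have upper : ∀ x, 0 < x → φ x ≤ 1 := by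
    intro x hx
    rw [hφH x hx, div_le_one (by positivity)]
    linarith [bennettH_le x hx.le]
  have hlim : Tendsto (fun x : ℝ ↦ 1 / (1 + x / 3)) (nhds 0) (nhds 1) := by
    have hcont : ContinuousAt (fun x : ℝ ↦ 1 / (1 + x / 3)) 0 := by fun_prop (disch := norm_num)
    simpa using hcont.tendsto
  refine ⟨tendsto_of_tendsto_of_tendsto_of_le_of_le' (hlim.mono_left nhdsWithin_le_nhds)
    tendsto_const_nhds ?_ ?_, lower⟩
  · exact eventually_nhdsWithin_of_forall lower
  · exact eventually_nhdsWithin_of_forall upper
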